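/- arXiv:2207.03981 — 3 statements merged into one kernel-verified Lean document; each statement's English description precedes it below -/
import Mathlib

section
/- Let h : ℝ^ℓ → ℝ be continuous with h(p) ≥ 0 for all p, such that for every t > 0 the sublevel set {p ∈ ℝ^ℓ : h(p) < t} is nonempty and connected. Let F : ℝ^m → ℝ be continuous and let c ∈ ℝ. Set H(p,q) = h(p) + F(q) for (p,q) ∈ ℝ^ℓ × ℝ^m, and let π(p,q) = q be the projection. Then π maps the open set {(p,q) : H(p,q) < c} onto {q : F(q) < c}, and two points of {H < c} lie in the same connected component of {H < c} if and only if their projections lie in the same connected component of {F < c}; consequently π induces a bijection between the connected components of {H < c} and the connected components of {F < c}. -/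
/-!
Restricted to `{H < c}`, the projection `(p, q) ↦ q` is continuous, open (the set is open) and
onto `{F < c}`, hence a quotient map; its fibre over `q` is `{h < c - F q}`, which is connected.
A quotient map with connected fibres induces a bijection on connected components.
-/

open Set Topology

theorem connectedComponentIn_eq_connectedComponentIn_iff {α : Type*} [TopologicalSpace α]
    {F : Set α} {x y : α} (hx : x ∈ F) (hy : y ∈ F) :
    connectedComponentIn F x = connectedComponentIn F y ↔
      ConnectedComponents.mk (⟨x, hx⟩ : F) = ConnectedComponents.mk ⟨y, hy⟩ := by
  rw [connectedComponentIn_eq_image hx, connectedComponentIn_eq_image hy,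
    (image_injective.mpr Subtype.val_injective).eq_iff, ConnectedComponents.coe_eq_coe]

theorem surjOn_snd_of_nonempty_fibers {X Y : Type*} {S : Set (X × Y)} {T : Set Y}
    (hfib : ∀ q ∈ T, {p : X | (p, q) ∈ S}.Nonempty) : SurjOn Prod.snd S T :=
  fun q hq ↦ let ⟨p, hp⟩ := hfib q hq; ⟨(p, q), hp, rfl⟩

section OpenSetOverBase

variable {X Y : Type*} [TopologicalSpace X] [TopologicalSpace Y] {S : Set (X × Y)} {T : Set Y}

theorem isConnected_preimage_restrict_snd (hST : MapsTo Prod.snd S T)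
    (hfib : ∀ q ∈ T, IsConnected {p : X | (p, q) ∈ S}) (q : T) :
    IsConnected (hST.restrict Prod.snd S T ⁻¹' {q}) := by
  have : ConnectedSpace {p : X | (p, q.1) ∈ S} := isConnected_iff_connectedSpace.mp (hfib q q.2)
  have hrange : hST.restrict Prod.snd S T ⁻¹' {q} =
      range (fun p : {p : X | (p, q.1) ∈ S} ↦ (⟨(p.1, q.1), p.2⟩ : S)) := by
    ext ⟨⟨p, q'⟩, hpq⟩
    constructor
    · rintro rfl
      exact ⟨⟨p, hpq⟩, rfl⟩
    · rintro ⟨p', hp'⟩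
      cases hp'
      rfl
  rw [hrange]
  exact isConnected_range (by fun_prop)

theorem bijective_connectedComponentsMap_restrict_snd (hS : IsOpen S) (hST : MapsTo Prod.snd S T)
    (hfib : ∀ q ∈ T, IsConnected {p : X | (p, q) ∈ S}) :
    (continuous_snd.restrict hST).connectedComponentsMap.Bijective := by
  have hsurj : Function.Surjective (hST.restrict Prod.snd S T) :=
    hST.restrict_surjective_iff.mpr (surjOn_snd_of_nonempty_fibers fun q hq ↦ (hfib q hq).nonempty)
  exact ((isOpenMap_snd.mapsToRestrict hS hST).isQuotientMap (continuous_snd.restrict hST)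
    hsurj).isCoinducing.connectedComponentsMap_bijective (isConnected_preimage_restrict_snd hST hfib)

end OpenSetOverBase

/-- For `H(p,q) = h(p) + F(q)` with `h ≥ 0` continuous having nonempty connected
sublevel sets, the projection `π(p,q) = q` maps `{H < c}` onto `{F < c}` and
induces a bijection between the connected components of `{H < c}` and those of
`{F < c}`. -/
theorem sublevel_components_of_sum {l m : ℕ}
    (h : EuclideanSpace ℝ (Fin l) → ℝ)
    (hcont : Continuous h) (hnn : ∀ p, 0 ≤ h p)
    (hconn : ∀ t : ℝ, 0 < t → IsConnected {p : EuclideanSpace ℝ (Fin l) | h p < t})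
    (F : EuclideanSpace ℝ (Fin m) → ℝ) (hF : Continuous F) (c : ℝ) :
    Prod.snd '' {x : EuclideanSpace ℝ (Fin l) × EuclideanSpace ℝ (Fin m) |
        h x.1 + F x.2 < c} = {q : EuclideanSpace ℝ (Fin m) | F q < c} ∧
    (∀ a b : EuclideanSpace ℝ (Fin l) × EuclideanSpace ℝ (Fin m),
      a ∈ {x : EuclideanSpace ℝ (Fin l) × EuclideanSpace ℝ (Fin m) | h x.1 + F x.2 < c} →
      b ∈ {x : EuclideanSpace ℝ (Fin l) × EuclideanSpace ℝ (Fin m) | h x.1 + F x.2 < c} →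
      (connectedComponentIn
          {x : EuclideanSpace ℝ (Fin l) × EuclideanSpace ℝ (Fin m) | h x.1 + F x.2 < c} a =
        connectedComponentIn
          {x : EuclideanSpace ℝ (Fin l) × EuclideanSpace ℝ (Fin m) | h x.1 + F x.2 < c} b ↔
       connectedComponentIn {q : EuclideanSpace ℝ (Fin m) | F q < c} a.2 =
        connectedComponentIn {q : EuclideanSpace ℝ (Fin m) | F q < c} b.2)) ∧
    ∃ e : ConnectedComponents
            {x : EuclideanSpace ℝ (Fin l) × EuclideanSpace ℝ (Fin m) // h x.1 + F x.2 < c} ≃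
          ConnectedComponents {q : EuclideanSpace ℝ (Fin m) // F q < c},
      ∀ (x : {x : EuclideanSpace ℝ (Fin l) × EuclideanSpace ℝ (Fin m) // h x.1 + F x.2 < c})
        (hx : F x.1.2 < c),
        e (ConnectedComponents.mk x) = ConnectedComponents.mk ⟨x.1.2, hx⟩ := by
  set S := {x : EuclideanSpace ℝ (Fin l) × EuclideanSpace ℝ (Fin m) | h x.1 + F x.2 < c}
  have hS : IsOpen S := isOpen_lt (by fun_prop) continuous_const
  have hST : MapsTo Prod.snd S {q | F q < c} := fun x hx ↦
    (le_add_of_nonneg_left (hnn x.1)).trans_lt hx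
  have hfib : ∀ q ∈ {q | F q < c}, IsConnected {p | (p, q) ∈ S} := fun q hq ↦ by
    simpa only [S, mem_ofPred_eq, ← lt_sub_iff_add_lt] using hconn _ (sub_pos.mpr hq)
  have hbij := bijective_connectedComponentsMap_restrict_snd hS hST hfib
  refine ⟨(surjOn_snd_of_nonempty_fibers fun q hq ↦ (hfib q hq).nonempty).image_eq_of_mapsTo hST,
    fun a b ha hb ↦ ?_, Equiv.ofBijective _ hbij, fun x hx ↦ rfl⟩
  rw [connectedComponentIn_eq_connectedComponentIn_iff ha hb,
    connectedComponentIn_eq_connectedComponentIn_iff (hST ha) (hST hb), ← hbij.injective.eq_iff]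
  rfl
end

section
/- Let F : ℝ^m → ℝ be continuous and let c ∈ ℝ. Set H(p,q) = |p|²/2 + F(q) for (p,q) ∈ ℝ^ℓ × ℝ^m, and let π(p,q) = q be the projection. Then π maps {(p,q) : H(p,q) < c} onto {q : F(q) < c} and induces a bijection between the connected components of {(p,q) : |p|²/2 + F(q) < c} and the connected components of {q : F(q) < c}. -/
/-- For `H(p,q) = |p|²/2 + F(q)`, the projection `π(p,q) = q` maps `{H < c}`
onto `{F < c}` and induces a bijection between the connected components of
`{H < c}` and those of `{F < c}`. -/
theorem sublevel_components_kinetic_plus_potential {l m : ℕ}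
    (F : EuclideanSpace ℝ (Fin m) → ℝ) (hF : Continuous F) (c : ℝ) :
    Prod.snd '' {x : EuclideanSpace ℝ (Fin l) × EuclideanSpace ℝ (Fin m) |
        ‖x.1‖ ^ 2 / 2 + F x.2 < c} = {q : EuclideanSpace ℝ (Fin m) | F q < c} ∧
    ∃ e : ConnectedComponents
            {x : EuclideanSpace ℝ (Fin l) × EuclideanSpace ℝ (Fin m) //
              ‖x.1‖ ^ 2 / 2 + F x.2 < c} ≃
          ConnectedComponents {q : EuclideanSpace ℝ (Fin m) // F q < c},
      ∀ (x : {x : EuclideanSpace ℝ (Fin l) × EuclideanSpace ℝ (Fin m) //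
          ‖x.1‖ ^ 2 / 2 + F x.2 < c}) (hx : F x.1.2 < c),
        e (ConnectedComponents.mk x) = ConnectedComponents.mk ⟨x.1.2, hx⟩ := by
  set S := {x : EuclideanSpace ℝ (Fin l) × EuclideanSpace ℝ (Fin m) |
      ‖x.1‖ ^ 2 / 2 + F x.2 < c}
  set T := {q : EuclideanSpace ℝ (Fin m) | F q < c}
  -- for x ∈ S, the q-part lies in T
  have hmemT : ∀ x : S, F x.1.2 < c := by
    rintro ⟨⟨p, q⟩, hx⟩
    have h0 : (0 : ℝ) ≤ ‖p‖ ^ 2 / 2 := by positivity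
    simp only [S, Set.mem_setOf_eq] at hx
    linarith
  -- forward map
  have f : S → T := fun x => ⟨x.1.2, hmemT x⟩
  let fmap : S → T := fun x => ⟨x.1.2, hmemT x⟩
  have hfc : Continuous fmap :=
    Continuous.subtype_mk (continuous_snd.comp continuous_subtype_val) _
  -- section
  have hmemS : ∀ q : T, ((0 : EuclideanSpace ℝ (Fin l)), q.1) ∈ S := by
    rintro ⟨q, hq⟩
    simp only [S, Set.mem_setOf_eq, norm_zero]
    norm_num
    exact hq
  let gmap : T → S := fun q => ⟨((0 : EuclideanSpace ℝ (Fin l)), q.1), hmemS q⟩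
  have hgc : Continuous gmap :=
    Continuous.subtype_mk (continuous_const.prodMk continuous_subtype_val) _
  have hfg : ∀ q : T, fmap (gmap q) = q := fun q => rfl
  -- each x ∈ S is joined to gmap (fmap x) by a path
  have hjoin : ∀ x : S, Joined (gmap (fmap x)) x := by
    rintro ⟨⟨p, q⟩, hx⟩
    have hx' : ‖p‖ ^ 2 / 2 + F q < c := hx
    refine ⟨{ toFun := fun t => ⟨((t : ℝ) • p, q), ?_⟩
              continuous_toFun := ?_
              source' := ?_
              target' := ?_ }⟩
    · show ‖(t : ℝ) • p‖ ^ 2 / 2 + F q < c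
      have h1 : ‖(t : ℝ) • p‖ ≤ ‖p‖ := by
        rw [norm_smul, Real.norm_eq_abs, abs_of_nonneg t.2.1]
        nlinarith [t.2.1, t.2.2, norm_nonneg p]
      have h2 : ‖(t : ℝ) • p‖ ^ 2 / 2 ≤ ‖p‖ ^ 2 / 2 := by
        nlinarith [norm_nonneg ((t : ℝ) • p)]
      linarith
    · exact Continuous.subtype_mk
        ((Continuous.smul continuous_subtype_val continuous_const).prodMk continuous_const) _
    · ext1; simp; rfl
    · ext1; simp
  -- build the equivalence
  constructor
  · ext q
    constructor
    · rintro ⟨x, hx, rfl⟩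
      exact hmemT ⟨x, hx⟩
    · intro hq
      exact ⟨((0 : EuclideanSpace ℝ (Fin l)), q), hmemS ⟨q, hq⟩, rfl⟩
  · have hfc' : Continuous ((ConnectedComponents.mk : T → ConnectedComponents T) ∘ fmap) :=
      ConnectedComponents.continuous_coe.comp hfc
    have hgc' : Continuous ((ConnectedComponents.mk : S → ConnectedComponents S) ∘ gmap) :=
      ConnectedComponents.continuous_coe.comp hgc
    refine ⟨{ toFun := hfc'.connectedComponentsLift
              invFun := hgc'.connectedComponentsLift
              left_inv := ?_
              right_inv := ?_ }, ?_⟩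
    · refine ConnectedComponents.surjective_coe.forall.2 fun x => ?_
      rw [hfc'.connectedComponentsLift_apply_coe, Function.comp_apply,
        hgc'.connectedComponentsLift_apply_coe, Function.comp_apply]
      exact ConnectedComponents.coe_eq_coe'.2
        (pathComponent_subset_component _ (hjoin x).symm)
    · refine ConnectedComponents.surjective_coe.forall.2 fun q => ?_
      rw [hgc'.connectedComponentsLift_apply_coe, Function.comp_apply,
        hfc'.connectedComponentsLift_apply_coe, Function.comp_apply, hfg]
    · intro x hx
      exact hfc'.connectedComponentsLift_apply_coe x
end

section
/- For every real a > 0: lim_{z→0⁺} ( ∫_{−a}^{a} √(z + u²) du − a² ) / ( z · log(1/z) ) = 1/2. -/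
open Filter

lemma integral_sqrt_add_sq_eq (a z : ℝ) (hz : 0 < z) :
    (∫ u in (-a)..a, Real.sqrt (z + u ^ 2))
      = a * Real.sqrt (z + a ^ 2) + z * Real.arsinh (a / Real.sqrt z) := by
  have hsz : (0:ℝ) < Real.sqrt z := Real.sqrt_pos.2 hz
  have key : ∀ u : ℝ, HasDerivAt
      (fun u : ℝ => (u * Real.sqrt (z + u ^ 2) + z * Real.arsinh (u / Real.sqrt z)) / 2)
      (Real.sqrt (z + u ^ 2)) u := by
    intro u
    have hpos : 0 < z + u ^ 2 := by positivity
    have hs : 0 < Real.sqrt (z + u ^ 2) := Real.sqrt_pos.2 hpos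
    have h1 : HasDerivAt (fun u : ℝ => z + u ^ 2) (2 * u) u := by
      simpa using ((hasDerivAt_pow 2 u).const_add z)
    have h2 : HasDerivAt (fun u : ℝ => Real.sqrt (z + u ^ 2))
        (1 / (2 * Real.sqrt (z + u ^ 2)) * (2 * u)) u :=
      (Real.hasDerivAt_sqrt (ne_of_gt hpos)).comp u h1
    have h3 : HasDerivAt (fun u : ℝ => u * Real.sqrt (z + u ^ 2))
        (1 * Real.sqrt (z + u ^ 2) + u * (1 / (2 * Real.sqrt (z + u ^ 2)) * (2 * u))) u :=
      (hasDerivAt_id u).mul h2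
    have h4 : HasDerivAt (fun u : ℝ => u / Real.sqrt z) (1 / Real.sqrt z) u := by
      simpa using (hasDerivAt_id u).div_const (Real.sqrt z)
    have h5 : HasDerivAt (fun u : ℝ => Real.arsinh (u / Real.sqrt z))
        ((Real.sqrt (1 + (u / Real.sqrt z) ^ 2))⁻¹ * (1 / Real.sqrt z)) u :=
      (Real.hasDerivAt_arsinh _).comp u h4
    have hrw : Real.sqrt (1 + (u / Real.sqrt z) ^ 2) = Real.sqrt (z + u ^ 2) / Real.sqrt z := by
      rw [← Real.sqrt_div' _ hz.le]
      congr 1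
      rw [div_pow, Real.sq_sqrt hz.le]
      field_simp
    rw [hrw] at h5
    have hsum := ((h3.add (h5.const_mul z)).div_const 2)
    refine hsum.congr_deriv ?_
    have hsq : Real.sqrt (z + u ^ 2) ^ 2 = z + u ^ 2 := Real.sq_sqrt hpos.le
    field_simp
    linear_combination (-1 : ℝ) * hsq
  have hcont : IntervalIntegrable (fun u => Real.sqrt (z + u ^ 2))
      MeasureTheory.volume (-a) a := by
    apply Continuous.intervalIntegrable
    continuity
  rw [intervalIntegral.integral_eq_sub_of_hasDerivAt (fun u _ => key u) hcont]
  have : ((-a : ℝ)) ^ 2 = a ^ 2 := by ring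
  rw [this, neg_div, Real.arsinh_neg]
  ring

/-- `∫_{-a}^{a} √(z + u²) du − a² ∼ (z/2) log(1/z)` as `z → 0⁺`. -/
theorem integral_sqrt_add_sq_asymptotic (a : ℝ) (ha : 0 < a) :
    Tendsto (fun z : ℝ =>
        ((∫ u in (-a)..a, Real.sqrt (z + u ^ 2)) - a ^ 2) / (z * Real.log (1 / z)))
      (nhdsWithin 0 (Set.Ioi 0)) (nhds (1 / 2)) := by
  set L : ℝ → ℝ := fun z => Real.log (1 / z) with hL
  -- L → atTop
  have hLtop : Tendsto L (nhdsWithin 0 (Set.Ioi 0)) atTop := by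
    simpa only [hL, Function.comp_def, one_div] using
      Real.tendsto_log_atTop.comp tendsto_inv_nhdsGT_zero
  -- √(z+a²) → a as z → 0⁺
  have hsq : Tendsto (fun z : ℝ => Real.sqrt (z + a ^ 2)) (nhdsWithin 0 (Set.Ioi 0))
      (nhds a) := by
    have : Tendsto (fun z : ℝ => Real.sqrt (z + a ^ 2)) (nhds 0) (nhds a) := by
      have h : ContinuousAt (fun z : ℝ => Real.sqrt (z + a ^ 2)) 0 := by
        exact (Real.continuous_sqrt.comp (continuous_id.add continuous_const)).continuousAt
      simpa [Real.sqrt_sq ha.le] using h.tendsto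
    exact this.mono_left nhdsWithin_le_nhds
  -- term 1 : a / ((√(z+a²)+a) * L z) → 0
  have hterm1 : Tendsto (fun z : ℝ => a / ((Real.sqrt (z + a ^ 2) + a) * L z))
      (nhdsWithin 0 (Set.Ioi 0)) (nhds 0) :=
    tendsto_const_nhds.div_atTop
      ((hsq.add tendsto_const_nhds).pos_mul_atTop (by linarith) hLtop)
  -- term 2 : log (a + √(z+a²)) / L z → 0
  have hterm2 : Tendsto (fun z : ℝ => Real.log (a + Real.sqrt (z + a ^ 2)) / L z)
      (nhdsWithin 0 (Set.Ioi 0)) (nhds 0) := by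
    have hnum : Tendsto (fun z : ℝ => Real.log (a + Real.sqrt (z + a ^ 2)))
        (nhdsWithin 0 (Set.Ioi 0)) (nhds (Real.log (a + a))) := by
      have hc : ContinuousAt Real.log (a + a) :=
        Real.continuousAt_log (by positivity)
      exact hc.tendsto.comp (tendsto_const_nhds.add hsq)
    exact hnum.div_atTop hLtop
  have hsum : Tendsto (fun z : ℝ =>
      a / ((Real.sqrt (z + a ^ 2) + a) * L z) + Real.log (a + Real.sqrt (z + a ^ 2)) / L z
        + 1 / 2)
      (nhdsWithin 0 (Set.Ioi 0)) (nhds (1 / 2)) := by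
    have := (hterm1.add hterm2).add (tendsto_const_nhds (x := (1:ℝ)/2))
    simpa using this
  refine hsum.congr' ?_
  filter_upwards [Ioo_mem_nhdsGT_of_mem (by norm_num : (0:ℝ) ∈ Set.Ico 0 1)] with z hz
  obtain ⟨hz0, hz1⟩ := hz
  have hLpos : 0 < L z := by
    exact Real.log_pos ((lt_div_iff₀ hz0).2 (by linarith))
  have hszpos : 0 < Real.sqrt z := Real.sqrt_pos.2 hz0
  set s := Real.sqrt (z + a ^ 2) with hs
  have hspos : 0 < s := Real.sqrt_pos.2 (by positivity)
  have hs2 : s ^ 2 = z + a ^ 2 := Real.sq_sqrt (by positivity)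
  have hars : Real.arsinh (a / Real.sqrt z) = Real.log (a + s) + L z / 2 := by
    have h1 : Real.sqrt (1 + (a / Real.sqrt z) ^ 2) = s / Real.sqrt z := by
      rw [hs, ← Real.sqrt_div' _ hz0.le]
      congr 1
      rw [div_pow, Real.sq_sqrt hz0.le]
      field_simp
    rw [Real.arsinh, h1, ← add_div, Real.log_div (by positivity) (ne_of_gt hszpos),
      Real.log_sqrt hz0.le, hL]
    simp only [one_div, Real.log_inv]
    ring
  rw [integral_sqrt_add_sq_eq a z hz0, hars, ← hs]
  have hsa : s + a ≠ 0 := by positivity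
  have hdiff : a * s - a ^ 2 = a * z / (s + a) := by
    rw [eq_div_iff hsa]
    nlinarith [hs2]
  have hnum : a * s + z * (Real.log (a + s) + L z / 2) - a ^ 2
      = a * z / (s + a) + z * Real.log (a + s) + z * (L z) / 2 := by
    linarith [hdiff]
  rw [hnum]
  change _ = _ / (z * L z)
  field_simp
end
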